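/- Let X, Y, Z be Banach spaces, P : X → Y a bounded linear map, and ι : X → Z a compact linear map. Suppose there exists C > 0 such that ‖u‖_X ≤ C(‖P u‖_Y + ‖ι u‖_Z) for all u ∈ X. Then the kernel of P is finite dimensional and the range of P is closed. -/

import Mathlib

/-!
The estimate says that `u ↦ (P u, ι u)` is bounded below, hence a closed embedding when `X` is
complete. On `ker P` it reads `‖u‖ ≤ C ‖ι u‖`, so `ι` is a compact uniform embedding of `ker P`,
whose unit ball is therefore totally bounded (Riesz). On a closed complement `q` of `ker P` the
map `P` is injective; were it not bounded below there, unit vectors `u n ∈ q` with `P (u n) → 0`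
would have a subsequence along which `ι (u n)` converges, hence along which `u n` itself
converges, to a unit vector of `q ⊓ ker P`. So `P` is bounded below on `q`, and `P '' q = range P`
is closed.
-/

open Filter Topology Function

theorem FiniteDimensional.of_isCompactOperator_of_antilipschitz
    {𝕜 E F : Type*} [NontriviallyNormedField 𝕜] [CompleteSpace 𝕜]
    [NormedAddCommGroup E] [NormedSpace 𝕜 E] [NormedAddCommGroup F] [NormedSpace 𝕜 F]
    {f : E →L[𝕜] F} (hf : IsCompactOperator f) {K : NNReal} (hK : AntilipschitzWith K f) :
    FiniteDimensional 𝕜 E := by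
  obtain ⟨V, hV, hfV⟩ := hf
  exact .of_totallyBounded_nhds_zero 𝕜 hfV
    (totallyBounded_preimage (hK.isUniformInducing f.uniformContinuous) hV.totallyBounded)

theorem ContinuousLinearMap.antilipschitz_of_forall_norm_eq_one
    {𝕜 E F : Type*} [RCLike 𝕜]
    [NormedAddCommGroup E] [NormedSpace 𝕜 E] [NormedAddCommGroup F] [NormedSpace 𝕜 F]
    (f : E →L[𝕜] F) {K : NNReal} (h : ∀ x, ‖x‖ = 1 → 1 ≤ K * ‖f x‖) :
    AntilipschitzWith K f := by
  refine f.antilipschitz_of_bound fun x => ?_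
  rcases eq_or_ne x 0 with rfl | hx
  · simp
  have hunit := h _ (norm_smul_inv_norm (𝕜 := 𝕜) hx)
  rw [map_smul, norm_smul, norm_inv, RCLike.norm_ofReal, abs_norm] at hunit
  calc ‖x‖ = ‖x‖ * 1 := (mul_one _).symm
    _ ≤ ‖x‖ * (K * (‖x‖⁻¹ * ‖f x‖)) := by gcongr
    _ = K * ‖f x‖ := by field_simp

theorem LinearMap.range_comp_subtype_of_isCompl_ker {R M N : Type*} [Ring R] [AddCommGroup M]
    [AddCommGroup N] [Module R M] [Module R N] {f : M →ₗ[R] N} {q : Submodule R M}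
    (h : IsCompl q (LinearMap.ker f)) : LinearMap.range (f ∘ₗ q.subtype) = LinearMap.range f := by
  rw [range_comp, Submodule.range_subtype, range_eq_map, ← h.sup_eq_top, Submodule.map_sup,
    left_eq_sup]
  exact Submodule.map_le_iff_le_comap.2 (ker_le_comap f)

section

variable {𝕜 E F G : Type*} [RCLike 𝕜]
  [NormedAddCommGroup E] [NormedSpace 𝕜 E]
  [NormedAddCommGroup F] [NormedSpace 𝕜 F]
  [NormedAddCommGroup G] [NormedSpace 𝕜 G]

def HasSemiFredholmEstimate (P : E →L[𝕜] F) (ι : E →L[𝕜] G) (C : ℝ) : Prop :=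
  ∀ u, ‖u‖ ≤ C * (‖P u‖ + ‖ι u‖)

namespace HasSemiFredholmEstimate

variable {P : E →L[𝕜] F} {ι : E →L[𝕜] G} {C : ℝ}

theorem comp_subtypeL (h : HasSemiFredholmEstimate P ι C) (q : Submodule 𝕜 E) :
    HasSemiFredholmEstimate (P ∘L q.subtypeL) (ι ∘L q.subtypeL) C :=
  fun u => h u

theorem antilipschitz_comp_subtypeL_ker (h : HasSemiFredholmEstimate P ι C) :
    AntilipschitzWith C.toNNReal (ι ∘L (LinearMap.ker (P : E →ₗ[𝕜] F)).subtypeL) := by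
  refine ContinuousLinearMap.antilipschitz_of_bound _ fun u => ?_
  calc ‖u‖ ≤ C * (‖P u‖ + ‖ι u‖) := h u
    _ = C * ‖ι u‖ := by rw [show P u = 0 from u.2, norm_zero, zero_add]
    _ ≤ C.toNNReal * ‖ι u‖ := by gcongr; exact Real.le_coe_toNNReal C

theorem antilipschitz_prod (h : HasSemiFredholmEstimate P ι C) (hC : 0 ≤ C) :
    AntilipschitzWith (2 * C).toNNReal (P.prod ι) := by
  refine ContinuousLinearMap.antilipschitz_of_bound _ fun u => ?_
  rw [Real.coe_toNNReal _ (by positivity), ContinuousLinearMap.prod_apply, Prod.norm_def]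
  calc ‖u‖ ≤ C * (‖P u‖ + ‖ι u‖) := h u
    _ ≤ C * (2 * max ‖P u‖ ‖ι u‖) := by
      gcongr
      linarith [le_max_left ‖P u‖ ‖ι u‖, le_max_right ‖P u‖ ‖ι u‖]
    _ = 2 * C * max ‖P u‖ ‖ι u‖ := by ring

theorem finiteDimensional_ker (h : HasSemiFredholmEstimate P ι C) (hι : IsCompactOperator ι) :
    FiniteDimensional 𝕜 (LinearMap.ker (P : E →ₗ[𝕜] F)) :=
  .of_isCompactOperator_of_antilipschitz (hι.comp_clm _) h.antilipschitz_comp_subtypeL_ker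

theorem exists_subseq_tendsto [CompleteSpace E] (h : HasSemiFredholmEstimate P ι C)
    (hι : IsCompactOperator ι) (hC : 0 ≤ C) {u : ℕ → E} {R : ℝ} (hu : ∀ n, ‖u n‖ ≤ R) {y : F}
    (hPu : Tendsto (P ∘ u) atTop (𝓝 y)) :
    ∃ x, ∃ φ : ℕ → ℕ, StrictMono φ ∧ Tendsto (u ∘ φ) atTop (𝓝 x) := by
  obtain ⟨K, hK, hιK⟩ := hι.image_closedBall_subset_compact (f := (ι : E →ₗ[𝕜] G)) R
  obtain ⟨z, -, φ, hφ, hz⟩ :=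
    hK.tendsto_subseq fun n => hιK ⟨u n, mem_closedBall_zero_iff.2 (hu n), rfl⟩
  have hT := (h.antilipschitz_prod hC).isClosedEmbedding (P.prod ι).uniformContinuous
  have hTu : Tendsto (P.prod ι ∘ u ∘ φ) atTop (𝓝 (y, z)) :=
    (hPu.comp hφ.tendsto_atTop).prodMk_nhds hz
  obtain ⟨x, hx⟩ : (y, z) ∈ Set.range (P.prod ι) :=
    hT.isClosed_range.mem_of_tendsto hTu (Eventually.of_forall fun n => Set.mem_range_self _)
  exact ⟨x, φ, hφ, hT.tendsto_nhds_iff.2 (hx ▸ hTu)⟩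

theorem exists_antilipschitz_of_injective [CompleteSpace E] (h : HasSemiFredholmEstimate P ι C)
    (hι : IsCompactOperator ι) (hC : 0 ≤ C) (hP : Injective P) : ∃ K, AntilipschitzWith K P := by
  by_contra! hK
  have hsmall : ∀ n : ℕ, ∃ u : E, ‖u‖ = 1 ∧ (n + 1) * ‖P u‖ < 1 := by
    intro n
    by_contra! hn
    exact hK (n + 1) (P.antilipschitz_of_forall_norm_eq_one (by exact_mod_cast hn))
  choose u hu1 huP using hsmall
  have hPu : Tendsto (P ∘ u) atTop (𝓝 0) := by
    refine tendsto_zero_iff_norm_tendsto_zero.2 <| squeeze_zero (fun n => norm_nonneg _)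
      (fun n => ?_) tendsto_one_div_add_atTop_nhds_zero_nat
    rw [le_div_iff₀ (by positivity), mul_comm]
    exact (huP n).le
  obtain ⟨x, φ, hφ, hx⟩ := h.exists_subseq_tendsto hι hC (fun n => (hu1 n).le) hPu
  have hx1 : ‖x‖ = 1 := tendsto_nhds_unique hx.norm (by simp [hu1])
  have hPx : P x = 0 :=
    tendsto_nhds_unique ((P.continuous.tendsto x).comp hx) (hPu.comp hφ.tendsto_atTop)
  simp [hP (hPx.trans (map_zero P).symm)] at hx1

theorem isClosed_range [CompleteSpace E] (h : HasSemiFredholmEstimate P ι C)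
    (hι : IsCompactOperator ι) (hC : 0 ≤ C) :
    IsClosed (LinearMap.range (P : E →ₗ[𝕜] F) : Set F) := by
  have := h.finiteDimensional_ker hι
  obtain ⟨q, hq, hcompl⟩ := (Submodule.ClosedComplemented.of_finiteDimensional
    (LinearMap.ker (P : E →ₗ[𝕜] F))).exists_isClosed_isCompl
  have : CompleteSpace q := hq.completeSpace_coe
  have hinj : Injective (P ∘L q.subtypeL) :=
    LinearMap.injective_domRestrict_iff.2 hcompl.symm.disjoint
  obtain ⟨K, hK⟩ := (h.comp_subtypeL q).exists_antilipschitz_of_injective (hι.comp_clm _) hC hinj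
  rw [← LinearMap.range_comp_subtype_of_isCompl_ker hcompl.symm]
  exact hK.isClosed_range (P ∘L q.subtypeL).uniformContinuous

end HasSemiFredholmEstimate

end

theorem semiFredholm_estimate_finiteDim_ker_and_closed_range_general
    {X Y Z : Type*}
    [NormedAddCommGroup X] [NormedSpace ℝ X] [CompleteSpace X]
    [NormedAddCommGroup Y] [NormedSpace ℝ Y]
    [NormedAddCommGroup Z] [NormedSpace ℝ Z]
    (P : X →L[ℝ] Y) (ι : X →L[ℝ] Z) (hι : IsCompactOperator ι)
    (C : ℝ) (hC : 0 < C) (hest : ∀ u : X, ‖u‖ ≤ C * (‖P u‖ + ‖ι u‖)) :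
    FiniteDimensional ℝ (LinearMap.ker (P : X →ₗ[ℝ] Y)) ∧ IsClosed (LinearMap.range (P : X →ₗ[ℝ] Y) : Set Y) :=
  ⟨HasSemiFredholmEstimate.finiteDimensional_ker hest hι,
    HasSemiFredholmEstimate.isClosed_range hest hι hC.le⟩

/-- The semi-Fredholm estimate: if `P : X → Y` is a bounded linear map between Banach spaces,
`ι : X → Z` is a compact linear map to a Banach space, and
`‖u‖ ≤ C (‖P u‖ + ‖ι u‖)` for all `u`, then `ker P` is finite dimensional and
the range of `P` is closed. -/
theorem semiFredholm_estimate_finiteDim_ker_and_closed_range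
    {X Y Z : Type*}
    [NormedAddCommGroup X] [NormedSpace ℝ X] [CompleteSpace X]
    [NormedAddCommGroup Y] [NormedSpace ℝ Y] [CompleteSpace Y]
    [NormedAddCommGroup Z] [NormedSpace ℝ Z] [CompleteSpace Z]
    (P : X →L[ℝ] Y) (ι : X →L[ℝ] Z) (hι : IsCompactOperator ι)
    (C : ℝ) (hC : 0 < C) (hest : ∀ u : X, ‖u‖ ≤ C * (‖P u‖ + ‖ι u‖)) :
    FiniteDimensional ℝ (LinearMap.ker (P : X →ₗ[ℝ] Y)) ∧ IsClosed (LinearMap.range (P : X →ₗ[ℝ] Y) : Set Y) :=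
  semiFredholm_estimate_finiteDim_ker_and_closed_range_general P ι hι C hC hest
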